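/- arXiv:1004.3219 — 6 statements merged into one kernel-verified Lean document; each statement's English description precedes it below -/
import Mathlib

section
/- Let g₁(s) = max(g(s) + m s, 0) for s ≥ 0, extended to all of ℝ as an odd function, and let g₂ = g₁ − g. Then for every ε > 0 there exists a constant C_ε > 0 such that g₁(s) ≤ C_ε s^{2*−1} + ε g₂(s) for all s ≥ 0. -/
open Filter Set Topology Real

/-!
Write `F s = g s + m s`, so that `g₁ = max F 0` on `[0, ∞)` and `g₂ s ≥ m s` there. Near `0`
the limsup hypothesis gives `F s ≤ ε m s`, near `∞` hypothesis (g3') gives `F s ≤ (1 + m) s^{2*-1}`,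
and on the compact interval in between the continuous `F` is bounded while `s^{2*-1}` is bounded
away from `0`.
-/

theorem eventually_lt_mul_of_limsup_div_lt {g : ℝ → ℝ} {a : ℝ}
    (h : limsup (fun s : ℝ => ((g s / s : ℝ) : EReal)) (𝓝[>] 0) < a) :
    ∀ᶠ s in 𝓝[>] 0, g s < a * s := by
  filter_upwards [eventually_lt_of_limsup_lt h, self_mem_nhdsWithin] with s hs hpos
  exact (div_lt_iff₀ hpos).1 (mod_cast hs)

theorem eventually_le_rpow_of_tendsto_div_abs_rpow {g : ℝ → ℝ} {q : ℝ}
    (h : Tendsto (fun s : ℝ => g s / |s| ^ q) atTop (𝓝 0)) :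
    ∀ᶠ s in atTop, g s ≤ s ^ q := by
  filter_upwards [h.eventually_lt_const one_pos, eventually_gt_atTop 0] with s hs hpos
  rw [abs_of_pos hpos, div_lt_one (rpow_pos_of_pos hpos q)] at hs
  exact hs.le

theorem exists_pos_le_mul_rpow_add {F G : ℝ → ℝ} {q C₀ : ℝ} (hq : 0 < q)
    (hF : ContinuousOn F (Ioi 0)) (hG : ∀ s > 0, 0 ≤ G s) (h0 : ∀ᶠ s in 𝓝[>] 0, F s ≤ G s)
    (hinf : ∀ᶠ s in atTop, F s ≤ C₀ * s ^ q) :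
    ∃ C > 0, ∀ s > 0, F s ≤ C * s ^ q + G s := by
  obtain ⟨δ, hδ, hsmall⟩ := mem_nhdsGT_iff_exists_Ioo_subset.1 h0
  obtain ⟨S, hlarge⟩ := eventually_atTop.1 hinf
  obtain ⟨B, hB⟩ := isCompact_Icc.bddAbove_image
    (hF.mono fun s (hs : s ∈ Icc δ S) => lt_of_lt_of_le hδ hs.1)
  have hδq : 0 < δ ^ q := rpow_pos_of_pos hδ q
  set C := max C₀ (max B 0 / δ ^ q) + 1
  have hC₀C : C₀ ≤ C := (le_max_left _ _).trans (le_add_of_nonneg_right zero_le_one)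
  have hBC : max B 0 / δ ^ q ≤ C := (le_max_right _ _).trans (le_add_of_nonneg_right zero_le_one)
  have hC : 0 < C :=
    (div_nonneg (le_max_right B 0) hδq.le).trans_lt ((le_max_right _ _).trans_lt (lt_add_one _))
  refine ⟨C, hC, fun s hs => ?_⟩
  have hCs : 0 ≤ C * s ^ q := mul_nonneg hC.le (rpow_pos_of_pos hs q).le
  have hGs : 0 ≤ G s := hG s hs
  rcases lt_or_ge s δ with hsδ | hδs
  · exact (hsmall ⟨hs, hsδ⟩).trans (le_add_of_nonneg_left hCs)
  rcases le_or_gt S s with hSs | hsS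
  · refine (hlarge s hSs).trans (le_add_of_le_of_nonneg ?_ hGs)
    gcongr
  · calc F s ≤ max B 0 := (hB ⟨s, ⟨hδs, hsS.le⟩, rfl⟩).trans (le_max_left _ _)
      _ = max B 0 / δ ^ q * δ ^ q := (div_mul_cancel₀ _ hδq.ne').symm
      _ ≤ C * s ^ q := mul_le_mul hBC (rpow_le_rpow hδ.le hδs hq.le) hδq.le hC.le
      _ ≤ C * s ^ q + G s := le_add_of_nonneg_right hGs

theorem one_le_two_mul_div_sub_two_sub_one {N : ℕ} (hN : 3 ≤ N) :
    1 ≤ 2 * (N : ℝ) / ((N : ℝ) - 2) - 1 := by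
  have hN' : (3 : ℝ) ≤ N := mod_cast hN
  rw [le_sub_iff_add_le, le_div_iff₀ (by linarith)]
  linarith

theorem stmt3_general (N : ℕ) (hN : 3 ≤ N) (g g₁ g₂ : ℝ → ℝ) (m : ℝ) (hm : 0 < m)
    (hgc : Continuous g) (hgodd : ∀ s, g (-s) = -g s)
    (hlimsup : Filter.limsup (fun s : ℝ => ((g s / s : ℝ) : EReal))
      (nhdsWithin 0 (Set.Ioi 0)) = ((-m : ℝ) : EReal))
    (hg3' : Filter.Tendsto (fun s : ℝ => g s / |s| ^ (2 * (N : ℝ) / ((N : ℝ) - 2) - 1))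
      Filter.atTop (nhds 0))
    (hg₁ : ∀ s, 0 ≤ s → g₁ s = max (g s + m * s) 0)
    (hg₂ : ∀ s, g₂ s = g₁ s - g s) :
    ∀ ε > (0 : ℝ), ∃ C > (0 : ℝ), ∀ s : ℝ, 0 ≤ s →
      g₁ s ≤ C * s ^ (2 * (N : ℝ) / ((N : ℝ) - 2) - 1) + ε * g₂ s := by
  intro ε hε
  set q := 2 * (N : ℝ) / ((N : ℝ) - 2) - 1
  have hq : 1 ≤ q := one_le_two_mul_div_sub_two_sub_one hN
  have hg0 : g 0 = 0 := by linarith [show g 0 = -g 0 by simpa using hgodd 0]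
  have hnear0 : ∀ᶠ s in 𝓝[>] 0, g s + m * s ≤ ε * (m * s) := by
    have : limsup (fun s : ℝ => ((g s / s : ℝ) : EReal)) (𝓝[>] 0) < (ε * m - m : ℝ) := by
      rw [hlimsup]
      exact mod_cast (by nlinarith : -m < ε * m - m)
    filter_upwards [eventually_lt_mul_of_limsup_div_lt this] with s hs
    linarith
  have hnearInf : ∀ᶠ s in atTop, g s + m * s ≤ (1 + m) * s ^ q := by
    filter_upwards [eventually_le_rpow_of_tendsto_div_abs_rpow hg3', eventually_ge_atTop 1]
      with s hgs hs
    nlinarith [self_le_rpow_of_one_le hs hq]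
  obtain ⟨C, hC, hbound⟩ := exists_pos_le_mul_rpow_add (by linarith)
    (hgc.add (continuous_const.mul continuous_id)).continuousOn
    (fun s hs => by positivity) hnear0 hnearInf
  refine ⟨C, hC, fun s hs => ?_⟩
  rcases hs.eq_or_lt with rfl | hs
  · simp [hg₂, hg₁, hg0, zero_rpow (by linarith : q ≠ 0)]
  have hmg₂ : m * s ≤ g₂ s := by
    rw [hg₂, hg₁ s hs.le]
    linarith [le_max_left (g s + m * s) 0]
  calc g₁ s = max (g s + m * s) 0 := hg₁ s hs.le
    _ ≤ C * s ^ q + ε * (m * s) := max_le (hbound s hs) (by positivity)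
    _ ≤ C * s ^ q + ε * g₂ s := by gcongr

/-- With g₁(s) = max(g(s)+ms, 0) for s ≥ 0 extended oddly and g₂ = g₁ − g,
for every ε > 0 there is C_ε > 0 with g₁(s) ≤ C_ε s^{2*−1} + ε g₂(s) for all s ≥ 0,
where 2* = 2N/(N−2). -/
theorem stmt3 (N : ℕ) (hN : 3 ≤ N) (g g₁ g₂ : ℝ → ℝ) (m : ℝ) (hm : 0 < m)
    (hgc : Continuous g) (hgodd : ∀ s, g (-s) = -g s)
    (hliminf : ⊥ < Filter.liminf (fun s : ℝ => ((g s / s : ℝ) : EReal))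
      (nhdsWithin 0 (Set.Ioi 0)))
    (hlimsup : Filter.limsup (fun s : ℝ => ((g s / s : ℝ) : EReal))
      (nhdsWithin 0 (Set.Ioi 0)) = ((-m : ℝ) : EReal))
    (hg3' : Filter.Tendsto (fun s : ℝ => g s / |s| ^ (2 * (N : ℝ) / ((N : ℝ) - 2) - 1))
      Filter.atTop (nhds 0))
    (hg₁ : ∀ s, 0 ≤ s → g₁ s = max (g s + m * s) 0)
    (hg₁odd : ∀ s, g₁ (-s) = -g₁ s)
    (hg₂ : ∀ s, g₂ s = g₁ s - g s) :
    ∀ ε > (0 : ℝ), ∃ C > (0 : ℝ), ∀ s : ℝ, 0 ≤ s →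
      g₁ s ≤ C * s ^ (2 * (N : ℝ) / ((N : ℝ) - 2) - 1) + ε * g₂ s :=
  stmt3_general N hN g g₁ g₂ m hm hgc hgodd hlimsup hg3' hg₁ hg₂
end

section
/- Let g₁(s) = max(g(s) + m s, 0) for s ≥ 0, extended to all of ℝ as an odd function, let g₂ = g₁ − g, and let G_i(t) = ∫₀ᵗ g_i(s) ds for i = 1, 2. Then for every ε > 0 there exists a constant C_ε > 0 such that G₁(s) ≤ C_ε |s|^{2*} + ε G₂(s) for all s ∈ ℝ. -/
open Filter Set intervalIntegral

lemma stmt4_cont_aux (g g₁ : ℝ → ℝ) (m : ℝ) (hgc : Continuous g)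
    (hgodd : ∀ s, g (-s) = -g s)
    (hg₁ : ∀ s, 0 ≤ s → g₁ s = max (g s + m * s) 0)
    (hg₁odd : ∀ s, g₁ (-s) = -g₁ s) : Continuous g₁ := by
  have hg0 : g 0 = 0 := by have := hgodd 0; simp at this; linarith
  have hneg : ∀ s : ℝ, g₁ s = -g₁ (-s) := by
    intro s; have := hg₁odd (-s); rw [neg_neg] at this; linarith
  have hfc : Continuous fun s : ℝ => g s + m * s := by
    exact hgc.add (continuous_const.mul continuous_id)
  rw [continuous_iff_continuousAt]
  intro x
  rcases lt_trichotomy x 0 with hx | rfl | hx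
  · have h1 : ContinuousAt (fun s : ℝ => -max (g (-s) + m * -s) 0) x := by
      apply Continuous.continuousAt
      exact (((hgc.comp continuous_neg).add
        (continuous_const.mul continuous_neg)).max continuous_const).neg
    refine h1.congr ?_
    filter_upwards [Iio_mem_nhds hx] with s hs
    have hsn : (0:ℝ) ≤ -s := by simp only [mem_Iio] at hs; linarith
    rw [← hg₁ (-s) hsn, ← hneg s]
  · have h0 : g₁ 0 = 0 := by rw [hg₁ 0 le_rfl]; simp [hg0]
    have habs : ∀ s : ℝ, |g₁ s| ≤ |g s + m * s| := by
      intro s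
      rcases le_or_gt 0 s with hs | hs
      · rw [hg₁ s hs, abs_of_nonneg (le_max_right _ _)]
        exact max_le (le_abs_self _) (abs_nonneg _)
      · have hsn : (0:ℝ) ≤ -s := by linarith
        have hEq : g (-s) + m * -s = -(g s + m * s) := by rw [hgodd]; ring
        rw [hneg s, abs_neg, hg₁ (-s) hsn, abs_of_nonneg (le_max_right _ _)]
        calc max (g (-s) + m * -s) 0 ≤ |g (-s) + m * -s| :=
              max_le (le_abs_self _) (abs_nonneg _)
          _ = |g s + m * s| := by rw [hEq, abs_neg]
    have htend : Tendsto (fun s : ℝ => g s + m * s) (nhds 0) (nhds 0) := by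
      have := hfc.tendsto 0
      simpa [hg0] using this
    have hzero : Tendsto g₁ (nhds 0) (nhds 0) :=
      squeeze_zero_norm (fun s => by simpa [Real.norm_eq_abs] using habs s)
        (by simpa using htend.abs)
    rw [ContinuousAt, h0]; exact hzero
  · have h1 : ContinuousAt (fun s : ℝ => max (g s + m * s) 0) x :=
      (hfc.max continuous_const).continuousAt
    refine h1.congr ?_
    filter_upwards [Ioi_mem_nhds hx] with s hs
    exact (hg₁ s (le_of_lt hs)).symm

/-- With g₁(s) = max(g(s)+ms, 0) for s ≥ 0 extended oddly, g₂ = g₁ − g and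
G_i(t) = ∫₀ᵗ g_i(s) ds, for every ε > 0 there is C_ε > 0 with
G₁(s) ≤ C_ε |s|^{2*} + ε G₂(s) for all s ∈ ℝ, where 2* = 2N/(N−2). -/
theorem stmt4 (N : ℕ) (hN : 3 ≤ N) (g g₁ g₂ : ℝ → ℝ) (m : ℝ) (hm : 0 < m)
    (hgc : Continuous g) (hgodd : ∀ s, g (-s) = -g s)
    (hliminf : ⊥ < Filter.liminf (fun s : ℝ => ((g s / s : ℝ) : EReal))
      (nhdsWithin 0 (Set.Ioi 0)))
    (hlimsup : Filter.limsup (fun s : ℝ => ((g s / s : ℝ) : EReal))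
      (nhdsWithin 0 (Set.Ioi 0)) = ((-m : ℝ) : EReal))
    (hg3' : Filter.Tendsto (fun s : ℝ => g s / |s| ^ (2 * (N : ℝ) / ((N : ℝ) - 2) - 1))
      Filter.atTop (nhds 0))
    (hg₁ : ∀ s, 0 ≤ s → g₁ s = max (g s + m * s) 0)
    (hg₁odd : ∀ s, g₁ (-s) = -g₁ s)
    (hg₂ : ∀ s, g₂ s = g₁ s - g s) :
    ∀ ε > (0 : ℝ), ∃ C > (0 : ℝ), ∀ s : ℝ,
      (∫ x in (0 : ℝ)..s, g₁ x) ≤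
        C * |s| ^ (2 * (N : ℝ) / ((N : ℝ) - 2)) + ε * ∫ x in (0 : ℝ)..s, g₂ x := by
  intro ε hε
  have hNpos : (0:ℝ) < (N:ℝ) - 2 := by
    have : (3:ℝ) ≤ (N:ℝ) := by exact_mod_cast hN
    linarith
  set q : ℝ := 2 * (N:ℝ) / ((N:ℝ) - 2) with hqdef
  have hq2 : 2 < q := by
    rw [hqdef, lt_div_iff₀ hNpos]; linarith
  have hq0 : (0:ℝ) < q := by linarith
  have hq1 : (1:ℝ) ≤ q - 1 := by linarith
  have hg0 : g 0 = 0 := by have := hgodd 0; simp at this; linarith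
  have hg₁c : Continuous g₁ := stmt4_cont_aux g g₁ m hgc hgodd hg₁ hg₁odd
  have hg₂c : Continuous g₂ := by
    have h : g₂ = fun s => g₁ s - g s := funext hg₂
    rw [h]; exact hg₁c.sub hgc
  -- small s bound
  have hlt : Filter.limsup (fun s : ℝ => ((g s / s : ℝ) : EReal))
      (nhdsWithin 0 (Set.Ioi 0)) < ((ε * m - m : ℝ) : EReal) := by
    rw [hlimsup]
    exact_mod_cast (by nlinarith : -m < ε * m - m)
  have hev : ∀ᶠ s in nhdsWithin 0 (Set.Ioi 0),
      ((g s / s : ℝ) : EReal) < ((ε * m - m : ℝ) : EReal) :=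
    Filter.eventually_lt_of_limsup_lt hlt
  obtain ⟨δ, hδ, hδ'⟩ := Metric.mem_nhdsWithin_iff.mp hev
  have hsmall : ∀ s : ℝ, 0 < s → s < δ → g₁ s ≤ ε * m * s := by
    intro s hs1 hs2
    have hmem : s ∈ Metric.ball (0:ℝ) δ ∩ Ioi 0 := by
      constructor
      · simp only [Metric.mem_ball, Real.dist_eq, sub_zero, abs_of_pos hs1]; exact hs2
      · exact hs1
    have h3 : g s / s < ε * m - m := by exact_mod_cast hδ' hmem
    have h4 : g s < (ε * m - m) * s := (div_lt_iff₀ hs1).mp h3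
    rw [hg₁ s hs1.le]
    exact max_le (by nlinarith) (by positivity)
  -- large s bound
  have hev2 : ∀ᶠ s in atTop, |g s / |s| ^ (q - 1)| < 1 := by
    have := Metric.tendsto_nhds.mp hg3' 1 one_pos
    simpa only [Real.dist_eq, sub_zero] using this
  obtain ⟨A, hA⟩ := Filter.eventually_atTop.mp hev2
  set B : ℝ := max A 1 with hB
  have hB1 : (1:ℝ) ≤ B := le_max_right A 1
  have hBpos : (0:ℝ) < B := lt_of_lt_of_le one_pos hB1
  have hlarge : ∀ s : ℝ, B ≤ s → g₁ s ≤ (1 + m) * s ^ (q - 1) := by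
    intro s hs
    have hs1 : (1:ℝ) ≤ s := le_trans hB1 hs
    have hs0 : (0:ℝ) < s := by linarith
    have h1 := hA s (le_trans (le_max_left A 1) hs)
    rw [abs_of_pos hs0] at h1
    have hrp : (0:ℝ) < s ^ (q - 1) := Real.rpow_pos_of_pos hs0 _
    have h2 : |g s| < s ^ (q - 1) := by
      rw [abs_div, abs_of_pos hrp] at h1
      exact (div_lt_one hrp).mp h1
    have h3 : s ≤ s ^ (q - 1) := by
      calc s = s ^ (1:ℝ) := (Real.rpow_one s).symm
        _ ≤ s ^ (q - 1) := Real.rpow_le_rpow_of_exponent_le hs1 hq1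
    rw [hg₁ s hs0.le]
    refine max_le ?_ (by positivity)
    have h5 := le_abs_self (g s)
    nlinarith
  -- middle bound
  obtain ⟨xm, hxm, hM⟩ := (isCompact_Icc (a := (0:ℝ)) (b := B)).exists_isMaxOn
    ⟨0, left_mem_Icc.mpr hBpos.le⟩ hg₁c.continuousOn
  set M : ℝ := g₁ xm with hMdef
  have hM0 : 0 ≤ M := by rw [hMdef, hg₁ xm hxm.1]; exact le_max_right _ _
  have hδp : (0:ℝ) < δ ^ (q - 1) := Real.rpow_pos_of_pos hδ _
  have hMδ : 0 ≤ M / δ ^ (q - 1) := div_nonneg hM0 hδp.le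
  set C₀ : ℝ := (1 + m) + M / δ ^ (q - 1) + 1 with hC₀
  have hC₀pos : 0 < C₀ := by rw [hC₀]; linarith
  -- pointwise bound
  have key : ∀ s : ℝ, 0 ≤ s → g₁ s ≤ ε * m * s + C₀ * s ^ (q - 1) := by
    intro s hs
    rcases hs.eq_or_lt with h | hs0
    · rw [← h]
      rw [hg₁ 0 le_rfl]
      simp [hg0, Real.zero_rpow (by linarith : q - 1 ≠ 0)]
    · have hpow : (0:ℝ) ≤ s ^ (q - 1) := Real.rpow_nonneg hs _
      rcases lt_or_ge s δ with h1 | h1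
      · have := hsmall s hs0 h1
        nlinarith [mul_nonneg hC₀pos.le hpow]
      · have hεms : 0 ≤ ε * m * s := by positivity
        rcases le_or_gt s B with h2 | h2
        · have hδs : δ ^ (q - 1) ≤ s ^ (q - 1) :=
            Real.rpow_le_rpow hδ.le h1 (by linarith)
          have hg1M : g₁ s ≤ M := hM ⟨hs, h2⟩
          have hmid : M ≤ (M / δ ^ (q - 1)) * s ^ (q - 1) := by
            rw [div_mul_eq_mul_div, le_div_iff₀ hδp]; nlinarith
          have hc : (M / δ ^ (q - 1)) * s ^ (q - 1) ≤ C₀ * s ^ (q - 1) := by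
            apply mul_le_mul_of_nonneg_right _ hpow
            rw [hC₀]; linarith
          have hfin : g₁ s ≤ C₀ * s ^ (q - 1) := le_trans hg1M (le_trans hmid hc)
          linarith
        · have hlg := hlarge s h2.le
          have hc : (1 + m) * s ^ (q - 1) ≤ C₀ * s ^ (q - 1) := by
            apply mul_le_mul_of_nonneg_right _ hpow
            rw [hC₀]; linarith
          linarith
  -- g₂ lower bound
  have hg₂m : ∀ x : ℝ, 0 ≤ x → m * x ≤ g₂ x := by
    intro x hx
    rw [hg₂ x, hg₁ x hx]
    have := le_max_left (g x + m * x) 0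
    linarith
  have hrpc : Continuous fun x : ℝ => x ^ (q - 1) :=
    Real.continuous_rpow_const (by linarith)
  -- main bound for nonnegative s
  have main : ∀ s : ℝ, 0 ≤ s → (∫ x in (0:ℝ)..s, g₁ x) ≤
      C₀ * s ^ q + ε * ∫ x in (0:ℝ)..s, g₂ x := by
    intro s hs
    have hintid : IntervalIntegrable (fun x : ℝ => ε * m * x) MeasureTheory.volume 0 s :=
      (continuous_const.mul continuous_id).intervalIntegrable _ _
    have hintrp : IntervalIntegrable (fun x : ℝ => C₀ * x ^ (q - 1))
        MeasureTheory.volume 0 s := (continuous_const.mul hrpc).intervalIntegrable _ _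
    have h1 : (∫ x in (0:ℝ)..s, g₁ x) ≤
        ∫ x in (0:ℝ)..s, (ε * m * x + C₀ * x ^ (q - 1)) :=
      intervalIntegral.integral_mono_on hs (hg₁c.intervalIntegrable _ _)
        (hintid.add hintrp) (fun x hx => key x hx.1)
    have h2 : (∫ x in (0:ℝ)..s, (ε * m * x + C₀ * x ^ (q - 1)))
        = ε * m * (s ^ 2 / 2) + C₀ * (s ^ q / q) := by
      rw [intervalIntegral.integral_add hintid hintrp,
        intervalIntegral.integral_const_mul, intervalIntegral.integral_const_mul,
        integral_id, integral_rpow (Or.inl (by linarith : (-1:ℝ) < q - 1)),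
        sub_add_cancel, Real.zero_rpow (ne_of_gt hq0)]
      ring
    have h3 : m * (s ^ 2 / 2) ≤ ∫ x in (0:ℝ)..s, g₂ x := by
      have hmono : (∫ x in (0:ℝ)..s, m * x) ≤ ∫ x in (0:ℝ)..s, g₂ x :=
        intervalIntegral.integral_mono_on hs
          ((continuous_const.mul continuous_id).intervalIntegrable _ _)
          (hg₂c.intervalIntegrable _ _) (fun x hx => hg₂m x hx.1)
      rw [intervalIntegral.integral_const_mul, integral_id] at hmono
      calc m * (s ^ 2 / 2) = m * ((s ^ 2 - 0 ^ 2) / 2) := by ring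
        _ ≤ _ := hmono
    have h4 : C₀ * (s ^ q / q) ≤ C₀ * s ^ q := by
      apply mul_le_mul_of_nonneg_left _ hC₀pos.le
      exact div_le_self (Real.rpow_nonneg hs _) (by linarith)
    calc (∫ x in (0:ℝ)..s, g₁ x) ≤ ε * m * (s ^ 2 / 2) + C₀ * (s ^ q / q) := by
          rw [← h2]; exact h1
      _ ≤ ε * (∫ x in (0:ℝ)..s, g₂ x) + C₀ * s ^ q := by
          have := mul_le_mul_of_nonneg_left h3 hε.le
          have h5 : ε * m * (s ^ 2 / 2) = ε * (m * (s ^ 2 / 2)) := by ring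
          linarith
      _ = C₀ * s ^ q + ε * ∫ x in (0:ℝ)..s, g₂ x := by ring
  -- evenness of the primitives
  have hevenInt : ∀ h : ℝ → ℝ, Continuous h → (∀ s, h (-s) = -h s) →
      ∀ s : ℝ, (∫ x in (0:ℝ)..(-s), h x) = ∫ x in (0:ℝ)..s, h x := by
    intro h hc hodd s
    have h1 : (∫ x in (0:ℝ)..s, h (-x)) = ∫ x in (-s)..(0:ℝ), h x := by
      simpa using intervalIntegral.integral_comp_neg (a := (0:ℝ)) (b := s) h
    have h2 : (∫ x in (0:ℝ)..s, h (-x)) = -∫ x in (0:ℝ)..s, h x := by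
      simp_rw [hodd]
      exact intervalIntegral.integral_neg
    have h3 : (∫ x in (-s)..(0:ℝ), h x) = -∫ x in (0:ℝ)..s, h x := h1.symm.trans h2
    have h4 : (∫ x in (-s)..(0:ℝ), h x) = -∫ x in (0:ℝ)..(-s), h x :=
      intervalIntegral.integral_symm 0 (-s)
    linarith
  have hg₂odd : ∀ s : ℝ, g₂ (-s) = -g₂ s := by
    intro s; rw [hg₂, hg₂, hg₁odd, hgodd]; ring
  refine ⟨C₀, hC₀pos, ?_⟩
  intro s
  rcases le_or_gt 0 s with hs | hs
  · rw [abs_of_nonneg hs]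
    exact main s hs
  · have hns : (0:ℝ) ≤ -s := by linarith
    have e1 : (∫ x in (0:ℝ)..s, g₁ x) = ∫ x in (0:ℝ)..(-s), g₁ x := by
      have := hevenInt g₁ hg₁c hg₁odd (-s); rw [neg_neg] at this; exact this
    have e2 : (∫ x in (0:ℝ)..s, g₂ x) = ∫ x in (0:ℝ)..(-s), g₂ x := by
      have := hevenInt g₂ hg₂c hg₂odd (-s); rw [neg_neg] at this; exact this
    rw [e1, e2, abs_of_neg hs]
    exact main (-s) hns
end

section
/- Let P and Q : ℝ → ℝ be two continuous functions such that for every ε > 0 there exists M > 0 with |P(s)| ≤ ε|Q(s)| whenever |s| ≥ M. Let {v_j}_j, v and w be Lebesgue-measurable functions from ℝ^N to ℝ, with w bounded, such that sup_j ∫_{ℝ^N} |Q(v_j(x)) w(x)| dx < +∞ and P(v_j(x)) → v(x) for almost every x ∈ ℝ^N. Then for every bounded Borel set B ⊆ ℝ^N one has ∫_B |(P(v_j(x)) − v(x)) w(x)| dx → 0 as j → ∞. -/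
open Filter Set MeasureTheory Topology
open scoped ENNReal NNReal

/-! Continuity of `P` and its domination by `Q` at infinity give `|P| ≤ K_ε + ε |Q|` for every
`ε > 0`. With `w` bounded and `∫ |Q(vⱼ) w|` bounded, the functions `P(vⱼ) w` are therefore
uniformly integrable on a set of finite measure, and Vitali's convergence theorem turns their
a.e. convergence into `L¹` convergence. -/

theorem exists_abs_le_add_mul_abs_of_continuous {P Q : ℝ → ℝ} (hP : Continuous P)
    (hPQ : ∀ ε > (0 : ℝ), ∃ M : ℝ, ∀ s : ℝ, M ≤ |s| → |P s| ≤ ε * |Q s|)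
    {ε : ℝ} (hε : 0 < ε) : ∃ K ≥ (0 : ℝ), ∀ s, |P s| ≤ K + ε * |Q s| := by
  obtain ⟨M, hM⟩ := hPQ ε hε
  obtain ⟨K, hK⟩ := isCompact_Icc.exists_bound_of_continuousOn (s := Icc (-M) M) hP.continuousOn
  refine ⟨max K 0, le_max_right _ _, fun s => ?_⟩
  have hεQ : 0 ≤ ε * |Q s| := by positivity
  rcases le_or_gt M |s| with hs | hs
  · linarith [hM s hs, le_max_right K 0]
  · have := hK s (abs_le.mp hs.le)
    rw [Real.norm_eq_abs] at this
    linarith [le_max_left K 0]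

section UniformIntegrable

variable {α ι β γ : Type*} [MeasurableSpace α] {μ : Measure α}
  [NormedAddCommGroup β] [NormedAddCommGroup γ]

theorem uniformIntegrable_of_le_add_mul [IsFiniteMeasure μ] {f : ι → α → β} {g : ι → α → γ}
    (hf : ∀ i, AEStronglyMeasurable (f i) μ) {C : ℝ≥0∞} (hC : C ≠ ∞)
    (hg : ∀ i, ∫⁻ x, ‖g i x‖ₑ ∂μ ≤ C)
    (hfg : ∀ ε > (0 : ℝ), ∃ K : ℝ, ∀ i x, ‖f i x‖ ≤ K + ε * ‖g i x‖) :
    UniformIntegrable f 1 μ := by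
  refine uniformIntegrable_of le_rfl ENNReal.one_ne_top hf fun ε hε => ?_
  set η := ε / (2 * (C.toReal + 1))
  have hη : 0 < η := by positivity
  obtain ⟨K, hK⟩ := hfg η hη
  -- Above the threshold `2K`, the constant `K` is absorbed by half of `‖f i x‖`.
  have htail : ∀ i x, (2 * K).toNNReal ≤ ‖f i x‖₊ → ‖f i x‖ ≤ 2 * η * ‖g i x‖ := by
    intro i x hx
    have : 2 * K ≤ ‖f i x‖ := Real.toNNReal_le_iff_le_coe.mp hx
    linarith [hK i x]
  refine ⟨(2 * K).toNNReal, fun i => ?_⟩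
  rw [eLpNorm_one_eq_lintegral_enorm]
  calc ∫⁻ x, ‖{x | (2 * K).toNNReal ≤ ‖f i x‖₊}.indicator (f i) x‖ₑ ∂μ
      ≤ ∫⁻ x, ENNReal.ofReal (2 * η) * ‖g i x‖ₑ ∂μ := by
        refine lintegral_mono fun x => ?_
        rw [indicator_apply]
        split_ifs with hx
        · rw [← ofReal_norm, ← ofReal_norm, ← ENNReal.ofReal_mul (by positivity)]
          exact ENNReal.ofReal_le_ofReal (htail i x hx)
        · simp
    _ ≤ ENNReal.ofReal (2 * η) * ENNReal.ofReal C.toReal := by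
        rw [lintegral_const_mul' _ _ ENNReal.ofReal_ne_top, ENNReal.ofReal_toReal hC]
        gcongr
        exact hg i
    _ ≤ ENNReal.ofReal ε := by
        rw [← ENNReal.ofReal_mul (by positivity)]
        refine ENNReal.ofReal_le_ofReal ?_
        calc 2 * η * C.toReal = ε * (C.toReal / (C.toReal + 1)) := by
              simp only [η]; field_simp
          _ ≤ ε := mul_le_of_le_one_right hε.le ((div_le_one (by positivity)).mpr (by linarith))

end UniformIntegrable

theorem tendsto_lintegral_abs_comp_sub_mul {α : Type*} [MeasurableSpace α]
    {μ : Measure α} [IsFiniteMeasure μ] {P Q : ℝ → ℝ} (hP : Continuous P)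
    (hPQ : ∀ ε > (0 : ℝ), ∃ M : ℝ, ∀ s : ℝ, M ≤ |s| → |P s| ≤ ε * |Q s|)
    {v : ℕ → α → ℝ} {vlim w : α → ℝ} (hv : ∀ j, AEMeasurable (v j) μ) (hw : AEMeasurable w μ)
    {Cw : ℝ} (hwb : ∀ x, |w x| ≤ Cw) {C : ℝ≥0∞} (hC : C ≠ ∞)
    (hsup : ∀ j, ∫⁻ x, ENNReal.ofReal |Q (v j x) * w x| ∂μ ≤ C)
    (hae : ∀ᵐ x ∂μ, Tendsto (fun j => P (v j x)) atTop (𝓝 (vlim x))) :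
    Tendsto (fun j => ∫⁻ x, ENNReal.ofReal |(P (v j x) - vlim x) * w x| ∂μ) atTop (𝓝 0) := by
  set f : ℕ → α → ℝ := fun j x => P (v j x) * w x
  have hf : ∀ j, AEStronglyMeasurable (f j) μ := fun j =>
    ((hP.measurable.comp_aemeasurable (hv j)).mul hw).aestronglyMeasurable
  have hdom : ∀ ε > (0 : ℝ), ∃ K : ℝ, ∀ j x, ‖f j x‖ ≤ K + ε * ‖Q (v j x) * w x‖ := by
    intro ε hε
    obtain ⟨K, hK0, hK⟩ := exists_abs_le_add_mul_abs_of_continuous hP hPQ hε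
    refine ⟨K * Cw, fun j x => ?_⟩
    simp only [f, Real.norm_eq_abs, abs_mul]
    calc |P (v j x)| * |w x| ≤ (K + ε * |Q (v j x)|) * |w x| := by gcongr; exact hK _
      _ ≤ K * Cw + ε * (|Q (v j x)| * |w x|) := by nlinarith [hwb x, abs_nonneg (w x)]
  have hui : UniformIntegrable f 1 μ := uniformIntegrable_of_le_add_mul hf hC
    (fun j => by simpa only [Real.enorm_eq_ofReal_abs] using hsup j) hdom
  have hlim : ∀ᵐ x ∂μ, Tendsto (fun j => f j x) atTop (𝓝 (vlim x * w x)) :=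
    hae.mono fun x hx => hx.mul_const (w x)
  have hL1 := tendsto_Lp_finite_of_tendsto_ae le_rfl ENNReal.one_ne_top hf
    (hui.memLp_of_ae_tendsto hlim) hui.2.1 hlim
  simpa only [eLpNorm_one_eq_lintegral_enorm, Pi.sub_apply, f, ← sub_mul,
    Real.enorm_eq_ofReal_abs] using hL1

theorem stmt6_general (N : ℕ) (P Q : ℝ → ℝ)
    (hP : Continuous P)
    (hPQ : ∀ ε > (0 : ℝ), ∃ M > (0 : ℝ), ∀ s : ℝ, M ≤ |s| → |P s| ≤ ε * |Q s|)
    (v : ℕ → EuclideanSpace ℝ (Fin N) → ℝ) (vlim w : EuclideanSpace ℝ (Fin N) → ℝ)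
    (hv : ∀ j, Measurable (v j)) (hw : Measurable w)
    (hwb : ∃ Cw : ℝ, ∀ x, |w x| ≤ Cw)
    (hsup : ∃ C : ENNReal, C ≠ ⊤ ∧ ∀ j,
      (∫⁻ x, ENNReal.ofReal |Q (v j x) * w x| ∂volume) ≤ C)
    (hae : ∀ᵐ x ∂(volume : Measure (EuclideanSpace ℝ (Fin N))),
      Filter.Tendsto (fun j => P (v j x)) Filter.atTop (nhds (vlim x))) :
    ∀ B : Set (EuclideanSpace ℝ (Fin N)), MeasurableSet B → Bornology.IsBounded B →
      Filter.Tendsto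
        (fun j => ∫⁻ x in B, ENNReal.ofReal |(P (v j x) - vlim x) * w x| ∂volume)
        Filter.atTop (nhds 0) := by
  intro B _ hB
  obtain ⟨Cw, hwb⟩ := hwb
  obtain ⟨C, hC, hsup⟩ := hsup
  have : IsFiniteMeasure (volume.restrict B) := isFiniteMeasure_restrict.mpr hB.measure_lt_top.ne
  exact tendsto_lintegral_abs_comp_sub_mul hP (fun ε hε => (hPQ ε hε).imp fun _ hM => hM.2)
    (fun j => (hv j).aemeasurable) hw.aemeasurable hwb hC
    (fun j => (setLIntegral_le_lintegral _ _).trans (hsup j)) (ae_restrict_of_ae hae)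

/-- Strauss-type compactness lemma, local version. -/
theorem stmt6 (N : ℕ) (hN : 1 ≤ N) (P Q : ℝ → ℝ)
    (hP : Continuous P) (hQ : Continuous Q)
    (hPQ : ∀ ε > (0 : ℝ), ∃ M > (0 : ℝ), ∀ s : ℝ, M ≤ |s| → |P s| ≤ ε * |Q s|)
    (v : ℕ → EuclideanSpace ℝ (Fin N) → ℝ) (vlim w : EuclideanSpace ℝ (Fin N) → ℝ)
    (hv : ∀ j, Measurable (v j)) (hvlim : Measurable vlim) (hw : Measurable w)
    (hwb : ∃ Cw : ℝ, ∀ x, |w x| ≤ Cw)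
    (hsup : ∃ C : ENNReal, C ≠ ⊤ ∧ ∀ j,
      (∫⁻ x, ENNReal.ofReal |Q (v j x) * w x| ∂volume) ≤ C)
    (hae : ∀ᵐ x ∂(volume : Measure (EuclideanSpace ℝ (Fin N))),
      Filter.Tendsto (fun j => P (v j x)) Filter.atTop (nhds (vlim x))) :
    ∀ B : Set (EuclideanSpace ℝ (Fin N)), MeasurableSet B → Bornology.IsBounded B →
      Filter.Tendsto
        (fun j => ∫⁻ x in B, ENNReal.ofReal |(P (v j x) - vlim x) * w x| ∂volume)
        Filter.atTop (nhds 0) :=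
  stmt6_general N P Q hP hPQ v vlim w hv hw hwb hsup hae
end

section
/- Let P and Q : ℝ → ℝ be two continuous functions such that for every ε > 0 there exists M > 0 with |P(s)| ≤ ε|Q(s)| whenever |s| ≥ M, and for every ε > 0 there exists δ > 0 with |P(s)| ≤ ε|Q(s)| whenever |s| ≤ δ. Let {v_j}_j, v and w be Lebesgue-measurable functions from ℝ^N to ℝ, with w bounded, such that sup_j ∫_{ℝ^N} |Q(v_j(x)) w(x)| dx < +∞, P(v_j(x)) → v(x) for almost every x ∈ ℝ^N, and for every ε > 0 there exists R > 0 such that |v_j(x)| ≤ ε for all j and all |x| ≥ R. Then ∫_{ℝ^N} |(P(v_j(x)) − v(x)) w(x)| dx → 0 as j → ∞. -/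
open Filter Set MeasureTheory
open scoped ENNReal NNReal Topology

/-!
Fix `ε > 0`. Small `|s|` and large `|s|` both give `|P s| ≤ ε |Q s|`; on the remaining compact
range `P` is bounded, and `|v j x| > δ` only happens for `‖x‖ < R`. Hence
`|P (v j) w| ≤ ε |Q (v j) w| + K 1_{B_R}` uniformly in `j`. Together with the uniform bound `C`
on `∫ |Q (v j) w|`, Fatou makes the limit `vlim * w` integrable, dominated convergence kills the
positive part of `|P (v j) w - vlim w| - ε |Q (v j) w|` (dominated by `K 1_{B_R} + |vlim w|`),
so the `limsup` of the integrals is at most `ε C`.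
-/

namespace MeasureTheory

variable {α E : Type*} [MeasurableSpace α] {μ : Measure α} [NormedAddCommGroup E]

theorem lintegral_le_mul_lintegral_add_of_ae_le {u g h : α → ℝ≥0∞} (c : ℝ≥0∞)
    (hg : AEMeasurable g μ) (hle : ∀ᵐ x ∂μ, u x ≤ c * g x + h x) :
    ∫⁻ x, u x ∂μ ≤ c * ∫⁻ x, g x ∂μ + ∫⁻ x, h x ∂μ := by
  calc ∫⁻ x, u x ∂μ ≤ ∫⁻ x, c * g x + h x ∂μ := lintegral_mono_ae hle
    _ = c * ∫⁻ x, g x ∂μ + ∫⁻ x, h x ∂μ := by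
      rw [lintegral_add_left' (hg.const_mul c), lintegral_const_mul'' c hg]

section Domination

variable {f : ℕ → α → E} {F : α → E} {g : ℕ → α → ℝ≥0∞} {C : ℝ≥0∞}

theorem integrable_of_tendsto_of_ae_enorm_le_add (hf : ∀ j, AEStronglyMeasurable (f j) μ)
    (hg : ∀ j, AEMeasurable (g j) μ) (hC : C ≠ ∞) (hgC : ∀ j, ∫⁻ x, g j x ∂μ ≤ C)
    {h : α → ℝ≥0∞} (hh : ∫⁻ x, h x ∂μ ≠ ∞) (hfh : ∀ j, ∀ᵐ x ∂μ, ‖f j x‖ₑ ≤ g j x + h x)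
    (hlim : ∀ᵐ x ∂μ, Tendsto (fun j => f j x) atTop (𝓝 (F x))) :
    Integrable F μ := by
  have hfatou : ∫⁻ x, ‖F x‖ₑ ∂μ ≤ liminf (fun j => ∫⁻ x, ‖f j x‖ₑ ∂μ) atTop :=
    lintegral_congr_ae (by filter_upwards [hlim] with x hx using hx.enorm.liminf_eq) ▸
      lintegral_liminf_le' fun j => (hf j).enorm
  have hbound : ∀ j, ∫⁻ x, ‖f j x‖ₑ ∂μ ≤ C + ∫⁻ x, h x ∂μ := fun j => by
    refine (lintegral_le_mul_lintegral_add_of_ae_le 1 (hg j) (by simpa using hfh j)).trans ?_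
    rw [one_mul]
    gcongr
    exact hgC j
  refine ⟨aestronglyMeasurable_of_tendsto_ae atTop hf hlim, ?_⟩
  refine lt_of_le_of_lt (hfatou.trans ?_) (ENNReal.add_lt_top.2 ⟨hC.lt_top, hh.lt_top⟩)
  exact liminf_le_of_frequently_le' (Frequently.of_forall hbound)

theorem limsup_lintegral_enorm_sub_le_mul (hf : ∀ j, AEStronglyMeasurable (f j) μ)
    (hg : ∀ j, AEMeasurable (g j) μ) (hgC : ∀ j, ∫⁻ x, g j x ∂μ ≤ C) (hF : Integrable F μ)
    {ε : ℝ≥0∞} {h : α → ℝ≥0∞} (hh : ∫⁻ x, h x ∂μ ≠ ∞)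
    (hfh : ∀ j, ∀ᵐ x ∂μ, ‖f j x‖ₑ ≤ ε * g j x + h x)
    (hlim : ∀ᵐ x ∂μ, Tendsto (fun j => f j x) atTop (𝓝 (F x))) :
    limsup (fun j => ∫⁻ x, ‖f j x - F x‖ₑ ∂μ) atTop ≤ ε * C := by
  set W : ℕ → α → ℝ≥0∞ := fun j x => ‖f j x - F x‖ₑ - ε * g j x
  have hW_meas : ∀ j, AEMeasurable (W j) μ := fun j =>
    ((hf j).sub hF.1).enorm.sub ((hg j).const_mul ε)
  have hW_le : ∀ j, W j ≤ᵐ[μ] fun x => h x + ‖F x‖ₑ := fun j => by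
    filter_upwards [hfh j] with x hx
    rw [tsub_le_iff_left, ← add_assoc]
    exact enorm_sub_le.trans (by gcongr)
  have hW_fin : ∫⁻ x, h x + ‖F x‖ₑ ∂μ ≠ ∞ := by
    rw [lintegral_add_right' _ hF.1.enorm]
    exact ENNReal.add_ne_top.2 ⟨hh, hF.2.ne⟩
  have hW_lim : ∀ᵐ x ∂μ, Tendsto (fun j => W j x) atTop (𝓝 0) := by
    filter_upwards [hlim] with x hx
    have hx' : Tendsto (fun j => ‖f j x - F x‖ₑ) atTop (𝓝 0) := by
      simpa using (hx.sub_const (F x)).enorm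
    exact tendsto_of_tendsto_of_tendsto_of_le_of_le tendsto_const_nhds hx'
      (fun _ => zero_le) (fun _ => tsub_le_self)
  have hW_int : Tendsto (fun j => ∫⁻ x, W j x ∂μ) atTop (𝓝 0) := by
    simpa using tendsto_lintegral_of_dominated_convergence' _ hW_meas hW_le hW_fin hW_lim
  have hle : ∀ j, ∫⁻ x, ‖f j x - F x‖ₑ ∂μ ≤ ε * C + ∫⁻ x, W j x ∂μ := fun j => by
    refine (lintegral_le_mul_lintegral_add_of_ae_le ε (hg j)
      (ae_of_all _ fun x => le_add_tsub)).trans ?_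
    gcongr
    exact hgC j
  calc limsup (fun j => ∫⁻ x, ‖f j x - F x‖ₑ ∂μ) atTop
      ≤ limsup (fun j => ε * C + ∫⁻ x, W j x ∂μ) atTop := limsup_le_limsup (.of_forall hle)
    _ = ε * C := by simpa using (tendsto_const_nhds.add hW_int).limsup_eq

theorem tendsto_lintegral_enorm_sub_of_forall_ae_enorm_le (hf : ∀ j, AEStronglyMeasurable (f j) μ)
    (hg : ∀ j, AEMeasurable (g j) μ) (hC : C ≠ ∞) (hgC : ∀ j, ∫⁻ x, g j x ∂μ ≤ C)
    (hdom : ∀ ε : ℝ≥0, 0 < ε → ∃ h : α → ℝ≥0∞, ∫⁻ x, h x ∂μ ≠ ∞ ∧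
      ∀ j, ∀ᵐ x ∂μ, ‖f j x‖ₑ ≤ ε * g j x + h x)
    (hlim : ∀ᵐ x ∂μ, Tendsto (fun j => f j x) atTop (𝓝 (F x))) :
    Tendsto (fun j => ∫⁻ x, ‖f j x - F x‖ₑ ∂μ) atTop (𝓝 0) := by
  obtain ⟨h₁, hh₁, hfh₁⟩ := hdom 1 one_pos
  have hF : Integrable F μ :=
    integrable_of_tendsto_of_ae_enorm_le_add hf hg hC hgC hh₁ (by simpa using hfh₁) hlim
  have hlimsup : ∀ ε : ℝ≥0, 0 < ε →
      limsup (fun j => ∫⁻ x, ‖f j x - F x‖ₑ ∂μ) atTop ≤ ε * C := fun ε hε => by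
    obtain ⟨h, hh, hfh⟩ := hdom ε hε
    exact limsup_lintegral_enorm_sub_le_mul hf hg hgC hF hh hfh hlim
  have hεC : Tendsto (fun ε : ℝ≥0 => (ε : ℝ≥0∞) * C) (𝓝[>] 0) (𝓝 0) := by
    have hcoe : Tendsto (fun ε : ℝ≥0 => (ε : ℝ≥0∞)) (𝓝[>] 0) (𝓝 0) :=
      (ENNReal.continuous_coe.tendsto' 0 0 ENNReal.coe_zero).mono_left nhdsWithin_le_nhds
    simpa using ENNReal.Tendsto.mul_const hcoe (Or.inr hC)
  exact tendsto_of_le_liminf_of_limsup_le zero_le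
    (ge_of_tendsto hεC (eventually_nhdsWithin_of_forall hlimsup))

end Domination

end MeasureTheory

theorem Continuous.exists_abs_le_mul_abs_add {P Q : ℝ → ℝ} (hP : Continuous P) {ε M : ℝ}
    (hε : 0 ≤ ε) (hM : ∀ s, M ≤ |s| → |P s| ≤ ε * |Q s|) :
    ∃ K ≥ 0, ∀ s, |P s| ≤ ε * |Q s| + K := by
  obtain ⟨K, hK⟩ := (isCompact_Icc (a := -M) (b := M)).exists_bound_of_continuousOn hP.continuousOn
  refine ⟨max K 0, le_max_right _ _, fun s => ?_⟩
  rcases le_or_gt M |s| with hs | hs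
  · exact (hM s hs).trans (le_add_of_nonneg_right (le_max_right _ _))
  · have hPs : |P s| ≤ K := hK s (abs_le.1 hs.le)
    have := mul_nonneg hε (abs_nonneg (Q s))
    linarith [le_max_left K 0]

theorem exists_enorm_comp_mul_le_mul_add_indicator_ball {X : Type*} [NormedAddCommGroup X]
    {P Q : ℝ → ℝ} (hP : Continuous P)
    (hPQtop : ∀ ε > (0 : ℝ), ∃ M > (0 : ℝ), ∀ s : ℝ, M ≤ |s| → |P s| ≤ ε * |Q s|)
    (hPQzero : ∀ ε > (0 : ℝ), ∃ δ > (0 : ℝ), ∀ s : ℝ, |s| ≤ δ → |P s| ≤ ε * |Q s|)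
    {v : ℕ → X → ℝ} (hdecay : ∀ ε > (0 : ℝ), ∃ R > (0 : ℝ), ∀ j x, R ≤ ‖x‖ → |v j x| ≤ ε)
    {w : X → ℝ} {Cw : ℝ} (hCw : ∀ x, |w x| ≤ Cw) {ε : ℝ} (hε : 0 < ε) :
    ∃ R K : ℝ, ∀ j x, ‖P (v j x) * w x‖ₑ ≤ ENNReal.ofReal ε * ‖Q (v j x) * w x‖ₑ +
      (Metric.ball 0 R).indicator (fun _ => ENNReal.ofReal K) x := by
  obtain ⟨M, -, hM⟩ := hPQtop ε hε
  obtain ⟨δ, hδ, hPQδ⟩ := hPQzero ε hε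
  obtain ⟨R, -, hR⟩ := hdecay δ hδ
  obtain ⟨K, hK0, hK⟩ := hP.exists_abs_le_mul_abs_add hε.le hM
  refine ⟨R, K * Cw, fun j x => ?_⟩
  have hw := hCw x
  have hCw0 : 0 ≤ Cw := (abs_nonneg _).trans hw
  simp only [Real.enorm_eq_ofReal_abs, abs_mul, ← ENNReal.ofReal_mul hε.le]
  by_cases hx : x ∈ Metric.ball 0 R
  · rw [indicator_of_mem hx, ← ENNReal.ofReal_add (by positivity) (by positivity)]
    refine ENNReal.ofReal_le_ofReal ?_
    calc |P (v j x)| * |w x| ≤ (ε * |Q (v j x)| + K) * |w x| := by gcongr; exact hK _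
      _ = ε * (|Q (v j x)| * |w x|) + K * |w x| := by ring
      _ ≤ ε * (|Q (v j x)| * |w x|) + K * Cw := by gcongr
  · rw [indicator_of_notMem hx, add_zero]
    have hvδ : |v j x| ≤ δ := hR j x (by simpa using hx)
    refine ENNReal.ofReal_le_ofReal ?_
    calc |P (v j x)| * |w x| ≤ ε * |Q (v j x)| * |w x| := by gcongr; exact hPQδ _ hvδ
      _ = ε * (|Q (v j x)| * |w x|) := mul_assoc _ _ _

theorem stmt7_general (N : ℕ) (P Q : ℝ → ℝ)
    (hP : Continuous P) (hQ : Continuous Q)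
    (hPQtop : ∀ ε > (0 : ℝ), ∃ M > (0 : ℝ), ∀ s : ℝ, M ≤ |s| → |P s| ≤ ε * |Q s|)
    (hPQzero : ∀ ε > (0 : ℝ), ∃ δ > (0 : ℝ), ∀ s : ℝ, |s| ≤ δ → |P s| ≤ ε * |Q s|)
    (v : ℕ → EuclideanSpace ℝ (Fin N) → ℝ) (vlim w : EuclideanSpace ℝ (Fin N) → ℝ)
    (hv : ∀ j, Measurable (v j)) (hw : Measurable w)
    (hwb : ∃ Cw : ℝ, ∀ x, |w x| ≤ Cw)
    (hsup : ∃ C : ENNReal, C ≠ ⊤ ∧ ∀ j,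
      (∫⁻ x, ENNReal.ofReal |Q (v j x) * w x| ∂volume) ≤ C)
    (hae : ∀ᵐ x ∂(volume : Measure (EuclideanSpace ℝ (Fin N))),
      Filter.Tendsto (fun j => P (v j x)) Filter.atTop (nhds (vlim x)))
    (hdecay : ∀ ε > (0 : ℝ), ∃ R > (0 : ℝ), ∀ j, ∀ x : EuclideanSpace ℝ (Fin N),
      R ≤ ‖x‖ → |v j x| ≤ ε) :
    Filter.Tendsto
      (fun j => ∫⁻ x, ENNReal.ofReal |(P (v j x) - vlim x) * w x| ∂volume)
      Filter.atTop (nhds 0) := by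
  obtain ⟨Cw, hCw⟩ := hwb
  obtain ⟨C, hC, hQC⟩ := hsup
  simp only [← Real.enorm_eq_ofReal_abs] at hQC ⊢
  have hdom : ∀ ε : ℝ≥0, 0 < ε → ∃ h : EuclideanSpace ℝ (Fin N) → ℝ≥0∞, ∫⁻ x, h x ≠ ∞ ∧
      ∀ j, ∀ᵐ x, ‖P (v j x) * w x‖ₑ ≤ ε * ‖Q (v j x) * w x‖ₑ + h x := fun ε hε => by
    obtain ⟨R, K, hRK⟩ := exists_enorm_comp_mul_le_mul_add_indicator_ball hP hPQtop hPQzero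
      hdecay hCw (NNReal.coe_pos.2 hε)
    refine ⟨_, ?_, fun j => ae_of_all _ fun x => by simpa using hRK j x⟩
    rw [lintegral_indicator_const measurableSet_ball]
    exact ENNReal.mul_ne_top ENNReal.ofReal_ne_top measure_ball_lt_top.ne
  simpa only [sub_mul] using tendsto_lintegral_enorm_sub_of_forall_ae_enorm_le
    (f := fun j x => P (v j x) * w x) (F := fun x => vlim x * w x)
    (fun j => ((hP.measurable.comp (hv j)).mul hw).aestronglyMeasurable)
    (fun j => ((hQ.measurable.comp (hv j)).mul hw).enorm.aemeasurable) hC hQC hdom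
    (by filter_upwards [hae] with x hx using hx.mul_const (w x))

/-- Strauss-type compactness lemma, global version. -/
theorem stmt7 (N : ℕ) (hN : 1 ≤ N) (P Q : ℝ → ℝ)
    (hP : Continuous P) (hQ : Continuous Q)
    (hPQtop : ∀ ε > (0 : ℝ), ∃ M > (0 : ℝ), ∀ s : ℝ, M ≤ |s| → |P s| ≤ ε * |Q s|)
    (hPQzero : ∀ ε > (0 : ℝ), ∃ δ > (0 : ℝ), ∀ s : ℝ, |s| ≤ δ → |P s| ≤ ε * |Q s|)
    (v : ℕ → EuclideanSpace ℝ (Fin N) → ℝ) (vlim w : EuclideanSpace ℝ (Fin N) → ℝ)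
    (hv : ∀ j, Measurable (v j)) (hvlim : Measurable vlim) (hw : Measurable w)
    (hwb : ∃ Cw : ℝ, ∀ x, |w x| ≤ Cw)
    (hsup : ∃ C : ENNReal, C ≠ ⊤ ∧ ∀ j,
      (∫⁻ x, ENNReal.ofReal |Q (v j x) * w x| ∂volume) ≤ C)
    (hae : ∀ᵐ x ∂(volume : Measure (EuclideanSpace ℝ (Fin N))),
      Filter.Tendsto (fun j => P (v j x)) Filter.atTop (nhds (vlim x)))
    (hdecay : ∀ ε > (0 : ℝ), ∃ R > (0 : ℝ), ∀ j, ∀ x : EuclideanSpace ℝ (Fin N),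
      R ≤ ‖x‖ → |v j x| ≤ ε) :
    Filter.Tendsto
      (fun j => ∫⁻ x, ENNReal.ofReal |(P (v j x) - vlim x) * w x| ∂volume)
      Filter.atTop (nhds 0) :=
  stmt7_general N P Q hP hQ hPQtop hPQzero v vlim w hv hw hwb hsup hae hdecay
end

section
/- There exists a constant C > 0 such that for every measurable function u : ℝ³ → ℝ one has ∫_{ℝ³}∫_{ℝ³} u(x)² u(y)² / |x − y| dx dy ≤ C ( ∫_{ℝ³} |u(x)|^{12/5} dx )^{5/3}, where both sides are understood as integrals of nonnegative functions (possibly +∞). -/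
/-!
Lieb's layer-cake argument for the Hardy–Littlewood–Sobolev inequality, applied to `f = u²`.
Writing `f x`, `f y` and `|x - y|⁻¹` as the lengths of `(0, f x)`, `(0, f y)` and
`(0, |x - y|⁻¹)` and exchanging the order of integration, the energy becomes
`∫∫∫ I(a, b, s) da db ds`, where `I(a, b, s)` is the measure of the pairs with `a < f x`,
`b < f y` and `s |x - y| < 1`. With `D t = |{f > t}|` one has `I ≤ D a · D b` and
`I ≤ |B₁| s⁻³ min (D a) (D b)`; splitting the `s`-integral where these bounds cross gives
`∫ I ds ≲ D (max a b) · D (min a b) ^ (2/3)`. With `A = ∫ f ^ (6/5)`, Chebyshev's inequality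
`D b ≤ A b ^ (-6/5)` for the smaller level and the layer-cake formula `∫ D a · a ^ (1/5) da ≲ A`
for the larger one bound the remaining double integral by a multiple of `A ^ (5/3)`.
-/

open MeasureTheory Set Metric ENNReal

theorem lintegral_Ioi_rpow_of_lt {a c : ℝ} (ha : a < -1) (hc : 0 < c) :
    ∫⁻ t in Ioi c, ENNReal.ofReal (t ^ a) = ENNReal.ofReal (-c ^ (a + 1) / (a + 1)) := by
  rw [← ofReal_integral_eq_lintegral_ofReal (integrableOn_Ioi_rpow_of_lt ha hc),
    integral_Ioi_rpow_of_lt ha hc]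
  filter_upwards [ae_restrict_mem measurableSet_Ioi] with t ht
  exact Real.rpow_nonneg (hc.trans ht).le a

theorem lintegral_Ioc_zero_rpow_of_neg_one_lt {a c : ℝ} (ha : -1 < a) (hc : 0 ≤ c) :
    ∫⁻ t in Ioc 0 c, ENNReal.ofReal (t ^ a) = ENNReal.ofReal (c ^ (a + 1) / (a + 1)) := by
  have hint : IntegrableOn (fun t : ℝ => t ^ a) (Ioc 0 c) :=
    (intervalIntegrable_iff_integrableOn_Ioc_of_le hc).1
      (intervalIntegral.intervalIntegrable_rpow' ha)
  rw [← ofReal_integral_eq_lintegral_ofReal hint, ← intervalIntegral.integral_of_le hc,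
    integral_rpow (Or.inl ha), Real.zero_rpow (by linarith), sub_zero]
  filter_upwards [ae_restrict_mem measurableSet_Ioc] with t ht
  exact Real.rpow_nonneg ht.1.le a

theorem volume_restrict_Ioi_zero_Iio (c : ℝ) :
    volume.restrict (Ioi 0) (Iio c) = ENNReal.ofReal c := by
  rw [Measure.restrict_apply measurableSet_Iio, Iio_inter_Ioi, Real.volume_Ioo, sub_zero]

theorem ofReal_mul_div_eq_volume_prod {s t d : ℝ} (hs : 0 ≤ s) (ht : 0 ≤ t) :
    ENNReal.ofReal (s * t / d) =
      (volume.restrict (Ioi 0)).prod ((volume.restrict (Ioi 0)).prod (volume.restrict (Ioi 0)))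
        (Iio s ×ˢ Iio t ×ˢ Iio d⁻¹) := by
  rw [Measure.prod_prod, Measure.prod_prod, volume_restrict_Ioi_zero_Iio,
    volume_restrict_Ioi_zero_Iio, volume_restrict_Ioi_zero_Iio, div_eq_mul_inv,
    ENNReal.ofReal_mul (mul_nonneg hs ht), ENNReal.ofReal_mul hs, mul_assoc]

theorem antitone_measure_lt {α : Type*} [MeasurableSpace α] (μ : Measure α) (f : α → ℝ) :
    Antitone fun t => μ {x | t < f x} :=
  fun _ _ hst => measure_mono fun _ hx => hst.trans_lt hx

theorem measure_lt_le_lintegral_rpow_mul {α : Type*} [MeasurableSpace α] {μ : Measure α}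
    {f : α → ℝ} (hf : Measurable f) {p b : ℝ} (hp : 0 ≤ p) (hb : 0 < b) :
    μ {x | b < f x} ≤ (∫⁻ x, ENNReal.ofReal (f x ^ p) ∂μ) * ENNReal.ofReal (b ^ (-p)) := by
  have hbp : 0 < b ^ p := Real.rpow_pos_of_pos hb p
  calc μ {x | b < f x} ≤ μ {x | ENNReal.ofReal (b ^ p) ≤ ENNReal.ofReal (f x ^ p)} :=
        measure_mono fun x hx =>
          ENNReal.ofReal_le_ofReal (Real.rpow_le_rpow hb.le (le_of_lt hx) hp)
    _ ≤ (∫⁻ x, ENNReal.ofReal (f x ^ p) ∂μ) / ENNReal.ofReal (b ^ p) :=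
        meas_ge_le_lintegral_div (hf.pow_const p).ennreal_ofReal.aemeasurable
          (ENNReal.ofReal_pos.2 hbp).ne' ENNReal.ofReal_ne_top
    _ = (∫⁻ x, ENNReal.ofReal (f x ^ p) ∂μ) * ENNReal.ofReal (b ^ (-p)) := by
        rw [div_eq_mul_inv, ← ENNReal.ofReal_inv_of_pos hbp, Real.rpow_neg hb.le]

theorem lintegral_measure_lt_mul_setLIntegral_le {α : Type*} [MeasurableSpace α] {μ : Measure α}
    {f : α → ℝ} (hf : Measurable f) (hf0 : 0 ≤ f) :
    ∫⁻ a in Ioi 0, μ {x | a < f x} * ∫⁻ b in Ioc 0 a, μ {x | b < f x} ^ (2 / 3 : ℝ) ≤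
      5 * (∫⁻ x, ENNReal.ofReal (f x ^ (6 / 5 : ℝ)) ∂μ) ^ (5 / 3 : ℝ) := by
  set A := ∫⁻ x, ENNReal.ofReal (f x ^ (6 / 5 : ℝ)) ∂μ
  set D : ℝ → ℝ≥0∞ := fun t => μ {x | t < f x}
  have hD : Measurable D := (antitone_measure_lt μ f).measurable
  have hinner (a : ℝ) (ha : 0 < a) :
      ∫⁻ b in Ioc 0 a, D b ^ (2 / 3 : ℝ) ≤ A ^ (2 / 3 : ℝ) * ENNReal.ofReal (5 * a ^ (1 / 5 : ℝ)) :=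
    calc ∫⁻ b in Ioc 0 a, D b ^ (2 / 3 : ℝ)
        ≤ ∫⁻ b in Ioc 0 a, A ^ (2 / 3 : ℝ) * ENNReal.ofReal (b ^ (-(4 / 5) : ℝ)) := by
          refine setLIntegral_mono' measurableSet_Ioc fun b hb => ?_
          calc D b ^ (2 / 3 : ℝ) ≤ (A * ENNReal.ofReal (b ^ (-(6 / 5) : ℝ))) ^ (2 / 3 : ℝ) :=
                ENNReal.rpow_le_rpow (measure_lt_le_lintegral_rpow_mul hf (by norm_num) hb.1)
                  (by norm_num)
            _ = A ^ (2 / 3 : ℝ) * ENNReal.ofReal (b ^ (-(4 / 5) : ℝ)) := by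
                rw [ENNReal.mul_rpow_of_nonneg _ _ (by norm_num),
                  ENNReal.ofReal_rpow_of_nonneg (Real.rpow_nonneg hb.1.le _) (by norm_num),
                  ← Real.rpow_mul hb.1.le]
                norm_num
      _ = A ^ (2 / 3 : ℝ) * ENNReal.ofReal (5 * a ^ (1 / 5 : ℝ)) := by
          rw [lintegral_const_mul _ (by fun_prop),
            lintegral_Ioc_zero_rpow_of_neg_one_lt (by norm_num) ha.le]
          congr 2
          ring_nf
  have hlayer : ∫⁻ t in Ioi 0, D t * ENNReal.ofReal (t ^ (1 / 5 : ℝ)) ≤ A := by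
    have h := lintegral_rpow_eq_lintegral_meas_lt_mul μ (ae_of_all _ hf0) hf.aemeasurable
      (by norm_num : (0 : ℝ) < 6 / 5)
    norm_num at h
    exact (le_mul_of_one_le_left' (ENNReal.one_le_ofReal.2 (by norm_num))).trans_eq h.symm
  calc ∫⁻ a in Ioi 0, D a * ∫⁻ b in Ioc 0 a, D b ^ (2 / 3 : ℝ)
      ≤ ∫⁻ a in Ioi 0, D a * (A ^ (2 / 3 : ℝ) * ENNReal.ofReal (5 * a ^ (1 / 5 : ℝ))) :=
        setLIntegral_mono' measurableSet_Ioi fun a ha => by gcongr; exact hinner a ha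
    _ = 5 * A ^ (2 / 3 : ℝ) * ∫⁻ a in Ioi 0, D a * ENNReal.ofReal (a ^ (1 / 5 : ℝ)) := by
        rw [← lintegral_const_mul _ (by fun_prop)]
        congr with a
        rw [ENNReal.ofReal_mul (by norm_num), ENNReal.ofReal_ofNat]
        ring
    _ ≤ 5 * A ^ (2 / 3 : ℝ) * A := by gcongr
    _ = 5 * A ^ (5 / 3 : ℝ) := by
        rw [show (5 / 3 : ℝ) = 2 / 3 + 1 by norm_num,
          ENNReal.rpow_add_of_nonneg _ _ (by norm_num) zero_le_one, ENNReal.rpow_one, mul_assoc]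

theorem lintegral_lintegral_le_two_mul_of_symm {ν : Measure ℝ} [SFinite ν] {K : ℝ → ℝ → ℝ≥0∞}
    (hK : Measurable (Function.uncurry K)) (hsymm : ∀ a b, K a b = K b a) :
    ∫⁻ a, ∫⁻ b, K a b ∂ν ∂ν ≤ 2 * ∫⁻ a, ∫⁻ b in Iic a, K a b ∂ν ∂ν := by
  set L : ℝ → ℝ → ℝ≥0∞ := fun a => (Iic a).indicator (K a)
  have hL : Measurable (Function.uncurry L) := by
    convert hK.indicator (measurableSet_le measurable_snd measurable_fst) using 1
    ext ⟨a, b⟩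
    simp [L, indicator_apply]
  have hKL (a b : ℝ) : K a b ≤ L a b + L b a := by
    rcases le_total b a with h | h
    · simp [L, h]
    · simp [L, h, hsymm a b]
  calc ∫⁻ a, ∫⁻ b, K a b ∂ν ∂ν ≤ ∫⁻ a, ∫⁻ b, L a b + L b a ∂ν ∂ν :=
        lintegral_mono fun a => lintegral_mono fun b => hKL a b
    _ = ∫⁻ a, ∫⁻ b, L a b ∂ν ∂ν + ∫⁻ a, ∫⁻ b, L b a ∂ν ∂ν := by
        have hLa (a : ℝ) : Measurable fun b => L a b := hL.comp measurable_prodMk_left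
        have hL' : Measurable fun a => ∫⁻ b, L a b ∂ν := hL.lintegral_prod_right'
        exact (lintegral_congr fun a => lintegral_add_left (hLa a) _).trans
          (lintegral_add_left hL' _)
    _ = 2 * ∫⁻ a, ∫⁻ b in Iic a, K a b ∂ν ∂ν := by
        rw [lintegral_lintegral_swap (f := fun a b => L b a) (hL.comp measurable_swap).aemeasurable,
          ← two_mul]
        simp_rw [L, lintegral_indicator measurableSet_Iic]

theorem setLIntegral_Ioi_le_of_le_mul_of_le_inv_pow_three {I : ℝ → ℝ≥0∞} {m M B : ℝ≥0∞}
    (h_prod : ∀ s, I s ≤ m * M) (h_ball : ∀ s, 0 < s → I s ≤ ENNReal.ofReal (s⁻¹ ^ 3) * B * m) :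
    ∫⁻ s in Ioi 0, I s ≤ (1 + B / 2) * m * M ^ (2 / 3 : ℝ) := by
  by_cases h0 : m * M = 0
  · exact (lintegral_mono fun s => (h_prod s).trans_eq h0).trans (by simp)
  obtain ⟨hm, hM⟩ := mul_ne_zero_iff.1 h0
  by_cases hMtop : M = ⊤
  · simp [hMtop, hm, ENNReal.top_rpow_of_pos]
  set x := M.toReal
  have hx : 0 < x := ENNReal.toReal_pos hM hMtop
  have hMx : M = ENNReal.ofReal x := (ENNReal.ofReal_toReal hMtop).symm
  have hM23 : M ^ (2 / 3 : ℝ) = ENNReal.ofReal (x ^ (2 / 3 : ℝ)) := by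
    rw [hMx, ENNReal.ofReal_rpow_of_nonneg hx.le (by norm_num)]
  -- `S = M ^ (-1/3)` is where `s⁻¹ ^ 3 = M`: beyond it the ball bound is the better one
  set S := x ^ (-(1 / 3) : ℝ)
  have hS : 0 < S := Real.rpow_pos_of_pos hx _
  have near : ∫⁻ s in Ioc 0 S, I s ≤ m * M ^ (2 / 3 : ℝ) :=
    calc ∫⁻ s in Ioc 0 S, I s ≤ ∫⁻ _ in Ioc 0 S, m * M := lintegral_mono h_prod
      _ = m * ENNReal.ofReal (x * S) := by
        rw [setLIntegral_const, Real.volume_Ioc, sub_zero, hMx, ENNReal.ofReal_mul hx.le, mul_assoc]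
      _ = m * M ^ (2 / 3 : ℝ) := by
        rw [hM23, show (2 / 3 : ℝ) = 1 + -(1 / 3) by norm_num, Real.rpow_add hx, Real.rpow_one]
  have far : ∫⁻ s in Ioi S, I s ≤ B / 2 * m * M ^ (2 / 3 : ℝ) :=
    calc ∫⁻ s in Ioi S, I s ≤ ∫⁻ s in Ioi S, ENNReal.ofReal (s ^ (-3 : ℝ)) * (B * m) := by
          refine setLIntegral_mono' measurableSet_Ioi fun s hs =>
            (h_ball s (hS.trans hs)).trans_eq ?_
          rw [Real.rpow_neg (hS.trans hs).le, inv_pow, mul_assoc]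
          norm_cast
      _ = ENNReal.ofReal (x ^ (2 / 3 : ℝ) / 2) * (B * m) := by
        rw [lintegral_mul_const _ (by fun_prop),
          lintegral_Ioi_rpow_of_lt (by norm_num) hS, ← Real.rpow_mul hx.le]
        norm_num
      _ = B / 2 * m * M ^ (2 / 3 : ℝ) := by
        rw [hM23, ENNReal.ofReal_div_of_pos two_pos, ENNReal.ofReal_ofNat]
        simp only [div_eq_mul_inv]
        ring
  rw [← Ioc_union_Ioi_eq_Ioi hS.le, lintegral_union measurableSet_Ioi Ioc_disjoint_Ioi_same]
  calc _ ≤ m * M ^ (2 / 3 : ℝ) + B / 2 * m * M ^ (2 / 3 : ℝ) := add_le_add near far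
    _ = (1 + B / 2) * m * M ^ (2 / 3 : ℝ) := by simp only [div_eq_mul_inv]; ring

section LevelPairs

variable {X : Type*} [PseudoMetricSpace X]

/-- Since `(dist x x)⁻¹ = 0`, for `s > 0` the last condition says exactly `dist x y < s⁻¹`. -/
def levelPairs (f : X → ℝ) (a b s : ℝ) : Set (X × X) :=
  {z | a < f z.1 ∧ b < f z.2 ∧ s < (dist z.1 z.2)⁻¹}

theorem levelPairs_swap (f : X → ℝ) (a b s : ℝ) :
    Prod.swap ⁻¹' levelPairs f a b s = levelPairs f b a s := by
  ext ⟨x, y⟩; simp [levelPairs, dist_comm, and_left_comm]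

variable [MeasurableSpace X]

theorem measure_levelPairs_le (μ : Measure X) [SFinite μ] (f : X → ℝ) (a b s : ℝ) :
    μ.prod μ (levelPairs f a b s) ≤ μ {x | a < f x} * μ {x | b < f x} := by
  rw [← Measure.prod_prod]
  exact measure_mono fun z hz => ⟨hz.1, hz.2.1⟩

variable [OpensMeasurableSpace X] [SecondCountableTopology X]

theorem measurableSet_levelPairs {f : X → ℝ} (hf : Measurable f) (a b s : ℝ) :
    MeasurableSet (levelPairs f a b s) :=
  (measurableSet_lt measurable_const (hf.comp measurable_fst)).inter <|
    (measurableSet_lt measurable_const (hf.comp measurable_snd)).inter <|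
      measurableSet_lt measurable_const measurable_dist.inv

theorem lintegral_lintegral_mul_div_dist_eq (μ : Measure X) [SFinite μ] {f : X → ℝ}
    (hf : Measurable f) (hf0 : 0 ≤ f) :
    ∫⁻ x, ∫⁻ y, ENNReal.ofReal (f x * f y / dist x y) ∂μ ∂μ =
      ∫⁻ a in Ioi 0, ∫⁻ b in Ioi 0, ∫⁻ s in Ioi 0, μ.prod μ (levelPairs f a b s) := by
  set ν := volume.restrict (Ioi (0 : ℝ))
  set Ω := {p : (X × X) × ℝ × ℝ × ℝ | p.1 ∈ levelPairs f p.2.1 p.2.2.1 p.2.2.2}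
  have hΩ : MeasurableSet Ω :=
    (measurableSet_lt measurable_snd.fst (hf.comp measurable_fst.fst)).inter <|
      (measurableSet_lt measurable_snd.snd.fst (hf.comp measurable_fst.snd)).inter <|
        measurableSet_lt measurable_snd.snd.snd (measurable_fst.fst.dist measurable_fst.snd).inv
  have hslice (z : X × X) :
      Prod.mk z ⁻¹' Ω = Iio (f z.1) ×ˢ Iio (f z.2) ×ˢ Iio (dist z.1 z.2)⁻¹ := by
    ext ⟨a, b, s⟩; simp [Ω, levelPairs]
  have hI : Measurable fun w : ℝ × ℝ × ℝ => μ.prod μ (levelPairs f w.1 w.2.1 w.2.2) :=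
    measurable_measure_prodMk_right hΩ
  calc ∫⁻ x, ∫⁻ y, ENNReal.ofReal (f x * f y / dist x y) ∂μ ∂μ
      = ∫⁻ z, ν.prod (ν.prod ν) (Prod.mk z ⁻¹' Ω) ∂μ.prod μ := by
        rw [lintegral_prod _ (measurable_measure_prodMk_left hΩ).aemeasurable]
        simp only [hslice, ← ofReal_mul_div_eq_volume_prod (hf0 _) (hf0 _), ν]
    _ = ∫⁻ w, μ.prod μ (levelPairs f w.1 w.2.1 w.2.2) ∂ν.prod (ν.prod ν) := by
        rw [← Measure.prod_apply hΩ, Measure.prod_apply_symm hΩ]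
        rfl
    _ = _ := by
        rw [lintegral_prod _ hI.aemeasurable]
        exact lintegral_congr fun a =>
          lintegral_prod _ (hI.comp measurable_prodMk_left).aemeasurable

end LevelPairs

section Haar

variable {E : Type*} [NormedAddCommGroup E] [NormedSpace ℝ E] [FiniteDimensional ℝ E]
  [MeasurableSpace E] [BorelSpace E] (μ : Measure E) [μ.IsAddHaarMeasure]

theorem measure_levelPairs_le_left {f : E → ℝ} (hf : Measurable f) (a b : ℝ) {s : ℝ} (hs : 0 < s) :
    μ.prod μ (levelPairs f a b s) ≤
      ENNReal.ofReal (s⁻¹ ^ Module.finrank ℝ E) * μ (ball 0 1) * μ {x | a < f x} := by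
  set c := ENNReal.ofReal (s⁻¹ ^ Module.finrank ℝ E) * μ (ball 0 1) with hc
  have hslice (x : E) :
      μ (Prod.mk x ⁻¹' levelPairs f a b s) ≤ {x | a < f x}.indicator (fun _ => c) x := by
    by_cases hx : a < f x
    · rw [indicator_of_mem (show x ∈ {x | a < f x} from hx), hc,
        ← Measure.addHaar_ball_of_pos μ x (inv_pos.2 hs)]
      refine measure_mono fun y hy => ?_
      have hd : s < (dist x y)⁻¹ := hy.2.2
      have hpos : 0 < dist x y := inv_pos.1 (hs.trans hd)
      rw [mem_ball, dist_comm]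
      exact (lt_inv_comm₀ hs hpos).1 hd
    · have : Prod.mk x ⁻¹' levelPairs f a b s = ∅ := by
        ext y; simp [levelPairs, hx]
      simp [this]
  rw [Measure.prod_apply (measurableSet_levelPairs hf a b s)]
  exact (lintegral_mono hslice).trans_eq
    (lintegral_indicator_const (measurableSet_lt measurable_const hf) _)

theorem measure_levelPairs_le_right {f : E → ℝ} (hf : Measurable f) (a b : ℝ) {s : ℝ} (hs : 0 < s) :
    μ.prod μ (levelPairs f a b s) ≤
      ENNReal.ofReal (s⁻¹ ^ Module.finrank ℝ E) * μ (ball 0 1) * μ {x | b < f x} := by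
  rw [← levelPairs_swap f b a s, Measure.measurePreserving_swap.measure_preimage
    (measurableSet_levelPairs hf b a s).nullMeasurableSet]
  exact measure_levelPairs_le_left μ hf b a hs

theorem setLIntegral_measure_levelPairs_le (hE : Module.finrank ℝ E = 3) {f : E → ℝ}
    (hf : Measurable f) (a b : ℝ) :
    ∫⁻ s in Ioi 0, μ.prod μ (levelPairs f a b s) ≤
      (1 + μ (ball 0 1) / 2) * (μ {x | max a b < f x} * μ {x | min a b < f x} ^ (2 / 3 : ℝ)) := by
  rw [← mul_assoc]
  rcases le_total a b with h | h
  · rw [max_eq_right h, min_eq_left h]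
    exact setLIntegral_Ioi_le_of_le_mul_of_le_inv_pow_three
      (fun s => (measure_levelPairs_le μ f a b s).trans_eq (mul_comm _ _))
      fun s hs => hE ▸ measure_levelPairs_le_right μ hf a b hs
  · rw [max_eq_left h, min_eq_right h]
    exact setLIntegral_Ioi_le_of_le_mul_of_le_inv_pow_three (measure_levelPairs_le μ f a b)
      fun s hs => hE ▸ measure_levelPairs_le_left μ hf a b hs

theorem lintegral_lintegral_mul_div_dist_le (hE : Module.finrank ℝ E = 3) {f : E → ℝ}
    (hf : Measurable f) (hf0 : 0 ≤ f) :
    ∫⁻ x, ∫⁻ y, ENNReal.ofReal (f x * f y / dist x y) ∂μ ∂μ ≤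
      10 * (1 + μ (ball 0 1) / 2) *
        (∫⁻ x, ENNReal.ofReal (f x ^ (6 / 5 : ℝ)) ∂μ) ^ (5 / 3 : ℝ) := by
  set B := μ (ball (0 : E) 1)
  set D : ℝ → ℝ≥0∞ := fun t => μ {x | t < f x}
  set K : ℝ → ℝ → ℝ≥0∞ := fun a b => D (max a b) * D (min a b) ^ (2 / 3 : ℝ)
  have hD : Measurable D := (antitone_measure_lt μ f).measurable
  have hK : Measurable (Function.uncurry K) :=
    (hD.comp (measurable_fst.max measurable_snd)).mul
      ((hD.comp (measurable_fst.min measurable_snd)).pow_const _)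
  have hB : 1 + B / 2 ≠ ⊤ := by finiteness
  calc ∫⁻ x, ∫⁻ y, ENNReal.ofReal (f x * f y / dist x y) ∂μ ∂μ
      = ∫⁻ a in Ioi 0, ∫⁻ b in Ioi 0, ∫⁻ s in Ioi 0, μ.prod μ (levelPairs f a b s) :=
        lintegral_lintegral_mul_div_dist_eq μ hf hf0
    _ ≤ ∫⁻ a in Ioi 0, ∫⁻ b in Ioi 0, (1 + B / 2) * K a b :=
        lintegral_mono fun a => lintegral_mono fun b =>
          setLIntegral_measure_levelPairs_le μ hE hf a b
    _ = (1 + B / 2) * ∫⁻ a in Ioi 0, ∫⁻ b in Ioi 0, K a b := by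
        simp_rw [lintegral_const_mul' _ _ hB]
    _ ≤ (1 + B / 2) * (2 * ∫⁻ a in Ioi 0, ∫⁻ b in Iic a, K a b ∂volume.restrict (Ioi 0)) := by
        gcongr
        exact lintegral_lintegral_le_two_mul_of_symm hK fun a b => by simp [K, max_comm, min_comm]
    _ = (1 + B / 2) * (2 * ∫⁻ a in Ioi 0, D a * ∫⁻ b in Ioc 0 a, D b ^ (2 / 3 : ℝ)) := by
        congr 2
        refine lintegral_congr fun a => ?_
        rw [Measure.restrict_restrict measurableSet_Iic, Iic_inter_Ioi,
          ← lintegral_const_mul _ (hD.pow_const _)]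
        exact setLIntegral_congr_fun measurableSet_Ioc fun b hb => by
          simp [K, max_eq_left hb.2, min_eq_right hb.2]
    _ ≤ (1 + B / 2) * (2 * (5 * (∫⁻ x, ENNReal.ofReal (f x ^ (6 / 5 : ℝ)) ∂μ) ^ (5 / 3 : ℝ))) := by
        gcongr
        exact lintegral_measure_lt_mul_setLIntegral_le hf hf0
    _ = _ := by ring

end Haar

/-- There is C > 0 such that for every measurable u : ℝ³ → ℝ,
∫∫ u(x)²u(y)²/|x−y| dx dy ≤ C (∫ |u|^{12/5})^{5/3}. -/
theorem stmt16 :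
    ∃ C : ℝ, 0 < C ∧ ∀ u : EuclideanSpace ℝ (Fin 3) → ℝ, Measurable u →
      (∫⁻ x, ∫⁻ y, ENNReal.ofReal ((u x) ^ 2 * (u y) ^ 2 / dist x y)
          ∂volume ∂volume) ≤
        ENNReal.ofReal C *
          (∫⁻ x, ENNReal.ofReal (|u x| ^ ((12 : ℝ) / 5)) ∂volume) ^ ((5 : ℝ) / 3) := by
  set K := 10 * (1 + volume (ball (0 : EuclideanSpace ℝ (Fin 3)) 1) / 2)
  have hK : K ≠ ⊤ := by finiteness
  refine ⟨K.toReal, ENNReal.toReal_pos (by simp [K]) hK, fun u hu => ?_⟩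
  have habs (x : EuclideanSpace ℝ (Fin 3)) : |u x| ^ ((12 : ℝ) / 5) = (u x ^ 2) ^ (6 / 5 : ℝ) := by
    rw [← sq_abs, ← Real.rpow_natCast, ← Real.rpow_mul (abs_nonneg _)]
    norm_num
  simp_rw [ENNReal.ofReal_toReal hK, habs]
  exact lintegral_lintegral_mul_div_dist_le volume finrank_euclideanSpace_fin (hu.pow_const 2)
    fun x => sq_nonneg _
end

section
/- There exist continuous odd functions g₁, g₂ : ℝ → ℝ such that g = g₁ − g₂ on ℝ, g₁(s) ≥ 0 and g₂(s) ≥ m s for all s ≥ 0, lim_{s→0} g₁(s)/s = 0, and lim_{s→+∞} g₁(s)/s^{2*−1} = 0. -/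
open Filter Topology

/-! For `s ≥ 0` take `g₁ s = (g s + m s)⁺`, extended to `ℝ` as an odd function, and
`g₂ = g₁ - g`. Then `g₂ s ≥ (g s + m s) - g s = m s` for `s ≥ 0`, and `g₁ s / s = (g s / s + m)⁺`
tends to `0` as `s → 0⁺` precisely because `limsup g s / s = -m`; evenness of `g₁ s / s` gives
the two-sided limit. At infinity `m s = o(s ^ (2* - 1))` since `2* - 1 > 1`, so
`(g s + m s)⁺ / s ^ (2* - 1) → 0` by (g3'). -/

noncomputable def oddExtension (h : ℝ → ℝ) (s : ℝ) : ℝ := if 0 ≤ s then h s else -h (-s)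

section OddExtension

variable {h : ℝ → ℝ}

theorem oddExtension_of_nonneg {s : ℝ} (hs : 0 ≤ s) : oddExtension h s = h s := if_pos hs

theorem oddExtension_odd (h0 : h 0 = 0) : Function.Odd (oddExtension h) := by
  intro s
  rcases lt_trichotomy s 0 with hs | rfl | hs
  · simp [oddExtension, hs.le, hs.not_ge]
  · simp [oddExtension, h0]
  · simp [oddExtension, hs.le, hs.not_ge]

theorem continuous_oddExtension (hc : Continuous h) (h0 : h 0 = 0) :
    Continuous (oddExtension h) :=
  Continuous.if_le hc (hc.comp continuous_neg).neg continuous_const continuous_id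
    fun x hx => by simp [← hx, h0]

end OddExtension

theorem Function.Even.tendsto_nhdsNE_of_nhdsGT {H β : Type*} [TopologicalSpace H] [AddCommGroup H]
    [LinearOrder H] [IsOrderedAddMonoid H] [ContinuousNeg H] {φ : H → β} {l : Filter β}
    (hφ : φ.Even) (h : Tendsto φ (𝓝[>] 0) l) : Tendsto φ (𝓝[≠] 0) l := by
  rw [← nhdsLT_sup_nhdsGT, tendsto_sup]
  refine ⟨?_, h⟩
  have := h.comp (tendsto_neg_nhdsLT_neg (a := (0 : H)))
  simpa [Function.comp_def, hφ.eq] using this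

theorem tendsto_max_zero_of_eventually_lt {α : Type*} {l : Filter α} {u : α → ℝ}
    (h : ∀ ε > 0, ∀ᶠ x in l, u x < ε) : Tendsto (fun x => max (u x) 0) l (𝓝 0) :=
  tendsto_order.2 ⟨fun _ ha => .of_forall fun _ => ha.trans_le (le_max_right _ _),
    fun ε hε => (h ε hε).mono fun _ hx => max_lt hx hε⟩

theorem tendsto_mul_div_rpow_atTop (c : ℝ) {p : ℝ} (hp : 1 < p) :
    Tendsto (fun s : ℝ => c * s / s ^ p) atTop (𝓝 0) := by
  have := (tendsto_rpow_neg_atTop (sub_pos.2 hp)).const_mul c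
  rw [mul_zero] at this
  refine this.congr' ?_
  filter_upwards [eventually_gt_atTop 0] with s hs
  rw [neg_sub, Real.rpow_sub hs, Real.rpow_one, mul_div_assoc]

theorem one_lt_two_mul_div_sub_two_sub_one {N : ℝ} (hN : 2 < N) : 1 < 2 * N / (N - 2) - 1 := by
  rw [lt_sub_iff_add_lt, lt_div_iff₀ (sub_pos.2 hN)]
  linarith

/-- `g₁` of the splitting `g = g₁ - g₂`. -/
noncomputable def shiftedPosPart (g : ℝ → ℝ) (m : ℝ) : ℝ → ℝ :=
  oddExtension fun s => max (g s + m * s) 0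

section ShiftedPosPart

variable {g : ℝ → ℝ} {m : ℝ}

theorem shiftedPosPart_of_nonneg {s : ℝ} (hs : 0 ≤ s) :
    shiftedPosPart g m s = max (g s + m * s) 0 :=
  oddExtension_of_nonneg hs

theorem shiftedPosPart_nonneg {s : ℝ} (hs : 0 ≤ s) : 0 ≤ shiftedPosPart g m s := by
  rw [shiftedPosPart_of_nonneg hs]
  exact le_max_right _ _

theorem mul_le_shiftedPosPart_sub {s : ℝ} (hs : 0 ≤ s) : m * s ≤ shiftedPosPart g m s - g s := by
  rw [shiftedPosPart_of_nonneg hs, le_sub_iff_add_le']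
  exact le_max_left _ _

theorem shiftedPosPart_odd (hg0 : g 0 = 0) : Function.Odd (shiftedPosPart g m) :=
  oddExtension_odd (by simp [hg0])

theorem continuous_shiftedPosPart (hgc : Continuous g) (hg0 : g 0 = 0) :
    Continuous (shiftedPosPart g m) :=
  continuous_oddExtension (by fun_prop) (by simp [hg0])

theorem tendsto_shiftedPosPart_div_nhdsGT
    (hlimsup : limsup (fun s : ℝ => ((g s / s : ℝ) : EReal)) (𝓝[>] 0) = ((-m : ℝ) : EReal)) :
    Tendsto (fun s => shiftedPosPart g m s / s) (𝓝[>] 0) (𝓝 0) := by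
  have hsmall : ∀ ε > 0, ∀ᶠ s in 𝓝[>] (0 : ℝ), g s / s + m < ε := fun ε hε => by
    have hlt : limsup (fun s : ℝ => ((g s / s : ℝ) : EReal)) (𝓝[>] 0) <
        ((-m + ε : ℝ) : EReal) := by
      rw [hlimsup, EReal.coe_lt_coe_iff]
      linarith
    filter_upwards [eventually_lt_of_limsup_lt hlt] with s hs
    have : g s / s < -m + ε := by exact_mod_cast hs
    linarith
  refine (tendsto_max_zero_of_eventually_lt hsmall).congr' ?_
  filter_upwards [self_mem_nhdsWithin] with s (hs : 0 < s)
  rw [shiftedPosPart_of_nonneg hs.le, ← max_div_div_right hs.le, zero_div, add_div,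
    mul_div_cancel_right₀ _ hs.ne']

theorem tendsto_shiftedPosPart_div_nhdsNE (hg0 : g 0 = 0)
    (hlimsup : limsup (fun s : ℝ => ((g s / s : ℝ) : EReal)) (𝓝[>] 0) = ((-m : ℝ) : EReal)) :
    Tendsto (fun s => shiftedPosPart g m s / s) (𝓝[≠] 0) (𝓝 0) := by
  refine Function.Even.tendsto_nhdsNE_of_nhdsGT (fun s => ?_)
    (tendsto_shiftedPosPart_div_nhdsGT hlimsup)
  rw [shiftedPosPart_odd hg0 s, neg_div_neg_eq]

theorem tendsto_shiftedPosPart_div_rpow_atTop {p : ℝ} (hp : 1 < p)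
    (hg : Tendsto (fun s => g s / s ^ p) atTop (𝓝 0)) :
    Tendsto (fun s => shiftedPosPart g m s / s ^ p) atTop (𝓝 0) := by
  have hsum := (hg.add (tendsto_mul_div_rpow_atTop m hp)).max (tendsto_const_nhds (x := 0))
  rw [add_zero, max_self] at hsum
  refine hsum.congr' ?_
  filter_upwards [eventually_gt_atTop 0] with s hs
  rw [shiftedPosPart_of_nonneg hs.le, ← max_div_div_right (Real.rpow_pos_of_pos hs p).le,
    zero_div, add_div]

end ShiftedPosPart

theorem stmt19_general (N : ℕ) (hN : 3 ≤ N) (g : ℝ → ℝ) (m : ℝ)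
    (hgc : Continuous g) (hgodd : ∀ s, g (-s) = -g s)
    (hlimsup : Filter.limsup (fun s : ℝ => ((g s / s : ℝ) : EReal))
      (nhdsWithin 0 (Set.Ioi 0)) = ((-m : ℝ) : EReal))
    (hg3' : Filter.Tendsto (fun s : ℝ => g s / |s| ^ (2 * (N : ℝ) / ((N : ℝ) - 2) - 1))
      Filter.atTop (nhds 0)) :
    ∃ g₁ g₂ : ℝ → ℝ,
      Continuous g₁ ∧ Continuous g₂ ∧
      (∀ s, g₁ (-s) = -g₁ s) ∧ (∀ s, g₂ (-s) = -g₂ s) ∧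
      (∀ s, g s = g₁ s - g₂ s) ∧
      (∀ s, 0 ≤ s → 0 ≤ g₁ s) ∧ (∀ s, 0 ≤ s → m * s ≤ g₂ s) ∧
      Filter.Tendsto (fun s => g₁ s / s) (nhdsWithin 0 {(0 : ℝ)}ᶜ) (nhds 0) ∧
      Filter.Tendsto (fun s : ℝ => g₁ s / s ^ (2 * (N : ℝ) / ((N : ℝ) - 2) - 1))
        Filter.atTop (nhds 0) := by
  have hg0 : g 0 = 0 := Function.Odd.map_zero hgodd
  have hp : 1 < 2 * (N : ℝ) / ((N : ℝ) - 2) - 1 :=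
    one_lt_two_mul_div_sub_two_sub_one (by exact_mod_cast hN)
  have hg3 : Tendsto (fun s : ℝ => g s / s ^ (2 * (N : ℝ) / ((N : ℝ) - 2) - 1)) atTop (𝓝 0) :=
    hg3'.congr' <| (eventually_ge_atTop 0).mono fun s hs => by rw [abs_of_nonneg hs]
  have hg₁odd := shiftedPosPart_odd (m := m) hg0
  refine ⟨shiftedPosPart g m, shiftedPosPart g m - g, continuous_shiftedPosPart hgc hg0,
    (continuous_shiftedPosPart hgc hg0).sub hgc, hg₁odd, fun s => ?_, fun _ => by simp,
    fun _ => shiftedPosPart_nonneg, fun _ => mul_le_shiftedPosPart_sub,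
    tendsto_shiftedPosPart_div_nhdsNE hg0 hlimsup, tendsto_shiftedPosPart_div_rpow_atTop hp hg3⟩
  simp only [Pi.sub_apply, hg₁odd s, hgodd s]
  ring

/-- There exist continuous odd functions g₁, g₂ with g = g₁ − g₂,
g₁(s) ≥ 0 and g₂(s) ≥ m s for s ≥ 0, lim_{s→0} g₁(s)/s = 0 and
lim_{s→+∞} g₁(s)/s^{2*−1} = 0, where 2* = 2N/(N−2). -/
theorem stmt19 (N : ℕ) (hN : 3 ≤ N) (g : ℝ → ℝ) (m : ℝ) (hm : 0 < m)
    (hgc : Continuous g) (hgodd : ∀ s, g (-s) = -g s)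
    (hliminf : ⊥ < Filter.liminf (fun s : ℝ => ((g s / s : ℝ) : EReal))
      (nhdsWithin 0 (Set.Ioi 0)))
    (hlimsup : Filter.limsup (fun s : ℝ => ((g s / s : ℝ) : EReal))
      (nhdsWithin 0 (Set.Ioi 0)) = ((-m : ℝ) : EReal))
    (hg3' : Filter.Tendsto (fun s : ℝ => g s / |s| ^ (2 * (N : ℝ) / ((N : ℝ) - 2) - 1))
      Filter.atTop (nhds 0)) :
    ∃ g₁ g₂ : ℝ → ℝ,
      Continuous g₁ ∧ Continuous g₂ ∧
      (∀ s, g₁ (-s) = -g₁ s) ∧ (∀ s, g₂ (-s) = -g₂ s) ∧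
      (∀ s, g s = g₁ s - g₂ s) ∧
      (∀ s, 0 ≤ s → 0 ≤ g₁ s) ∧ (∀ s, 0 ≤ s → m * s ≤ g₂ s) ∧
      Filter.Tendsto (fun s => g₁ s / s) (nhdsWithin 0 {(0 : ℝ)}ᶜ) (nhds 0) ∧
      Filter.Tendsto (fun s : ℝ => g₁ s / s ^ (2 * (N : ℝ) / ((N : ℝ) - 2) - 1))
        Filter.atTop (nhds 0) :=
  stmt19_general N hN g m hgc hgodd hlimsup hg3'
end
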